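/- arXiv:1610.07508 — 7 statements merged into one kernel-verified Lean document; each statement's English description precedes it below -/
import Mathlib

section
/- Let X be a compact Hausdorff space and (g_α) an almost non-increasing net of upper semicontinuous real-valued functions on X converging pointwise to g. Then sup_X g_α converges to sup_X g. -/
/-!
Each `g α` is bounded above (upper semicontinuous on a compact space), and so is the limit, being
within `ε` of any late `g α`. The bound `sup g ≤ liminf sup g_α` is immediate from pointwise
convergence. For `limsup sup g_α ≤ sup g`, the pointwise eventual bounds `g α x < sup g + ε` are
made uniform in `x` as in Dini's theorem: compactness and upper semicontinuity give a single index
beyond which they all hold, up to the `ε` lost to almost monotonicity.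
-/

open Filter Topology Set

theorem UpperSemicontinuous.bddAbove_range {X β : Type*} [TopologicalSpace X] [CompactSpace X]
    [LinearOrder β] [Nonempty β] {f : X → β} (hf : UpperSemicontinuous f) :
    BddAbove (range f) := by
  simpa only [image_univ] using
    (hf.upperSemicontinuousOn univ).bddAbove_of_isCompact isCompact_univ

/-- The sets `⋃_{A ≤ a ≤ β} {g a < c}` form a directed open cover of `X`, so one of them is
everything; beyond that `β`, almost monotonicity moves the bound `g a < c` to every later `g α`
at the cost of `ε`. -/
theorem eventually_forall_lt_add_of_almost_antitone {ι X : Type*} [Preorder ι]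
    [IsDirected ι (· ≤ ·)] [TopologicalSpace X] [CompactSpace X] {g : ι → X → ℝ}
    (husc : ∀ α, UpperSemicontinuous (g α)) {A : ι} {ε c : ℝ}
    (hA : ∀ α α', A ≤ α → α ≤ α' → ∀ x, g α' x - ε ≤ g α x)
    (hc : ∀ x, ∀ᶠ α in atTop, g α x < c) :
    ∀ᶠ α in atTop, ∀ x, g α x < c + ε := by
  have : Nonempty ι := ⟨A⟩
  let W : ι → Set X := fun β => ⋃ a ∈ Icc A β, g a ⁻¹' Iio c
  have hW_open : ∀ β, IsOpen (W β) := fun β =>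
    isOpen_biUnion fun a _ => (husc a).isOpen_preimage c
  have hW_mono : Monotone W := fun β β' h =>
    biUnion_subset_biUnion_left (Icc_subset_Icc_right h)
  have hW_cover : univ ⊆ ⋃ β, W β := fun x _ => by
    obtain ⟨a, ha⟩ := ((hc x).and (eventually_ge_atTop A)).exists
    exact mem_iUnion.2 ⟨a, mem_biUnion ⟨ha.2, le_rfl⟩ ha.1⟩
  obtain ⟨β, hβ⟩ := isCompact_univ.elim_directed_cover W hW_open hW_cover hW_mono.directed_le
  filter_upwards [eventually_ge_atTop β] with α hα x
  obtain ⟨a, ⟨hAa, haβ⟩, hx⟩ := mem_iUnion₂.1 (hβ (mem_univ x))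
  linarith [hA a α hAa (haβ.trans hα) x, show g a x < c from hx]

theorem sup_tendsto_of_almost_nonincreasing_general {ι X : Type*} [Preorder ι]
    [IsDirected ι (· ≤ ·)] [TopologicalSpace X]
    [CompactSpace X] [Nonempty X]
    (g : ι → X → ℝ) (glim : X → ℝ)
    (hmon : ∀ ε : ℝ, 0 < ε → ∃ A : ι, ∀ α α' : ι, A ≤ α → α ≤ α' →
      ∀ x : X, g α' x - ε ≤ g α x)
    (husc : ∀ α, UpperSemicontinuous (g α))
    (hlim : ∀ x, Tendsto (fun α => g α x) atTop (𝓝 (glim x))) :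
    Tendsto (fun α => ⨆ x, g α x) atTop (𝓝 (⨆ x, glim x)) := by
  have hbdd : ∀ α, BddAbove (range (g α)) := fun α => (husc α).bddAbove_range
  have hbdd_lim : BddAbove (range glim) := by
    obtain ⟨A, hA⟩ := hmon 1 one_pos
    have : Nonempty ι := ⟨A⟩
    obtain ⟨B, hB⟩ := hbdd A
    refine ⟨B + 1, forall_mem_range.2 fun x => ?_⟩
    have hle : glim x ≤ g A x + 1 := le_of_tendsto (hlim x) <|
      (eventually_ge_atTop A).mono fun α hα => by linarith [hA A α le_rfl hα x]
    linarith [hB (mem_range_self x)]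
  refine tendsto_order.2 ⟨fun a ha => ?_, fun b hb => ?_⟩
  · obtain ⟨x, hx⟩ := exists_lt_of_lt_ciSup ha
    filter_upwards [(hlim x).eventually (lt_mem_nhds hx)] with α hα
    exact hα.trans_le (le_ciSup (hbdd α) x)
  · set S := ⨆ x, glim x
    have hε : 0 < (b - S) / 3 := by linarith
    obtain ⟨A, hA⟩ := hmon _ hε
    have hc : ∀ x, ∀ᶠ α in atTop, g α x < S + (b - S) / 3 := fun x =>
      (hlim x).eventually (gt_mem_nhds ((le_ciSup hbdd_lim x).trans_lt (by linarith)))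
    filter_upwards [eventually_forall_lt_add_of_almost_antitone husc hA hc] with α hα
    exact (ciSup_le fun x => (hα x).le).trans_lt (by linarith)

/-- Generalized Dini theorem: for an almost non-increasing net of upper
semicontinuous functions on a compact Hausdorff space converging pointwise,
the suprema converge to the supremum of the limit. -/
theorem sup_tendsto_of_almost_nonincreasing {ι X : Type*} [Preorder ι]
    [IsDirected ι (· ≤ ·)] [Nonempty ι] [TopologicalSpace X] [T2Space X]
    [CompactSpace X] [Nonempty X]
    (g : ι → X → ℝ) (glim : X → ℝ)
    (hmon : ∀ ε : ℝ, 0 < ε → ∃ A : ι, ∀ α α' : ι, A ≤ α → α ≤ α' →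
      ∀ x : X, g α' x - ε ≤ g α x)
    (husc : ∀ α, UpperSemicontinuous (g α))
    (hlim : ∀ x, Tendsto (fun α => g α x) atTop (𝓝 (glim x))) :
    Tendsto (fun α => ⨆ x, g α x) atTop (𝓝 (⨆ x, glim x)) :=
  sup_tendsto_of_almost_nonincreasing_general g glim hmon husc hlim
end

section
/- A net (z_α) in a metric space (X,d) with basepoint b is an almost geodesic if and only if the net of functions φ_{z_α}(·) := d(·, z_α) − d(b, z_α) is almost non-increasing. -/
theorem dist_add_dist_sub_le_iff_forall_sub_dist_le {X : Type*} [PseudoMetricSpace X]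
    (b y y' : X) (ε : ℝ) :
    dist b y + dist y y' - ε ≤ dist b y' ↔
      ∀ x : X, (dist x y' - dist b y') - ε ≤ dist x y - dist b y := by
  constructor
  · intro h x
    linarith [dist_triangle x y y']
  · intro h
    have hy := h y
    rw [dist_self] at hy
    linarith

/-- A net in a metric space is an almost geodesic iff the associated net of
functions `d(·, z_α) − d(b, z_α)` is almost non-increasing. -/
theorem almost_geodesic_iff_almost_nonincreasing {ι X : Type*} [Preorder ι]
    [MetricSpace X] (z : ι → X) (b : X) :
    (∀ ε : ℝ, 0 < ε → ∃ A : ι, ∀ α α' : ι, A ≤ α → α ≤ α' →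
        dist b (z α) + dist (z α) (z α') - ε ≤ dist b (z α')) ↔
    (∀ ε : ℝ, 0 < ε → ∃ A : ι, ∀ α α' : ι, A ≤ α → α ≤ α' →
        ∀ x : X, (dist x (z α') - dist b (z α')) - ε ≤ dist x (z α) - dist b (z α)) :=
  forall₂_congr fun ε _ => exists_congr fun _ => forall₄_congr fun α α' _ _ =>
    dist_add_dist_sub_le_iff_forall_sub_dist_le b (z α) (z α') ε
end

section
/- Let (z_α) be an almost geodesic net in a complete metric space (X,d) with basepoint b. If the net d(b, z_α) is bounded, then (z_α) converges to a point of X. -/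
/-!
Along an almost geodesic, `d(z α, z β) ≤ d(b, z β) - d(b, z α) + ε` for large `α ≤ β`. In particular
the distances `d(b, z α)` are almost nondecreasing; being bounded, they eventually stay within `ε`
of the supremum over a tail, so their increments become small and `(z α)` is a Cauchy net.
-/

open Filter Topology Set

def IsAlmostGeodesic {ι X : Type*} [Preorder ι] [PseudoMetricSpace X] (b : X) (z : ι → X) :
    Prop :=
  ∀ ε : ℝ, 0 < ε → ∃ A : ι, ∀ α α' : ι, A ≤ α → α ≤ α' →
    dist b (z α) + dist (z α) (z α') - ε ≤ dist b (z α')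

theorem exists_forall_sub_lt_of_almost_monotone {ι : Type*} [Preorder ι] {f : ι → ℝ}
    (hf : ∀ ε > 0, ∃ A, ∀ α α', A ≤ α → α ≤ α' → f α - ε ≤ f α')
    (hbdd : BddAbove (range f)) {ε : ℝ} (hε : 0 < ε) :
    ∃ α₀, ∀ α β, α₀ ≤ α → α ≤ β → f β - f α < ε := by
  obtain ⟨A, hA⟩ := hf (ε / 2) (half_pos hε)
  have hne : (f '' Ici A).Nonempty := ⟨f A, A, le_rfl, rfl⟩
  have hbdd' : BddAbove (f '' Ici A) := hbdd.mono (image_subset_range f _)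
  obtain ⟨_, ⟨α₀, hAα₀, rfl⟩, hα₀⟩ := exists_lt_of_lt_csSup hne (sub_lt_self _ (half_pos hε))
  refine ⟨α₀, fun α β hα hβ => ?_⟩
  have hβ_le : f β ≤ sSup (f '' Ici A) := le_csSup hbdd' ⟨β, hAα₀.trans (hα.trans hβ), rfl⟩
  linarith [hA α₀ α hAα₀ hα]

theorem cauchySeq_of_forall_dist_lt_of_le {ι α : Type*} [Preorder ι] [IsDirectedOrder ι]
    [Nonempty ι] [PseudoMetricSpace α] {u : ι → α}
    (h : ∀ ε > 0, ∃ N, ∀ m n, N ≤ m → m ≤ n → dist (u m) (u n) < ε) : CauchySeq u := by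
  refine Metric.cauchy_iff.2 ⟨map_neBot, fun ε hε => ?_⟩
  obtain ⟨N, hN⟩ := h (ε / 2) (half_pos hε)
  refine ⟨u '' Ici N, image_mem_map (mem_atTop N), ?_⟩
  rintro _ ⟨m, hm, rfl⟩ _ ⟨n, hn, rfl⟩
  obtain ⟨k, hmk, hnk⟩ := directed_of (· ≤ ·) m n
  calc dist (u m) (u n) ≤ dist (u m) (u k) + dist (u n) (u k) := dist_triangle_right _ _ _
    _ < ε / 2 + ε / 2 := add_lt_add (hN m k hm hmk) (hN n k hn hnk)
    _ = ε := add_halves ε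

theorem IsAlmostGeodesic.cauchySeq {ι X : Type*} [Preorder ι] [IsDirectedOrder ι] [Nonempty ι]
    [PseudoMetricSpace X] {b : X} {z : ι → X} (hz : IsAlmostGeodesic b z)
    (hbdd : BddAbove (range fun α => dist b (z α))) : CauchySeq z := by
  have hmono : ∀ ε > 0, ∃ A, ∀ α α', A ≤ α → α ≤ α' → dist b (z α) - ε ≤ dist b (z α') :=
    fun ε hε => (hz ε hε).imp fun A hA α α' hα hαα' => by
      linarith [hA α α' hα hαα', dist_nonneg (x := z α) (y := z α')]
  refine cauchySeq_of_forall_dist_lt_of_le fun ε hε => ?_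
  obtain ⟨A, hA⟩ := hz (ε / 2) (half_pos hε)
  obtain ⟨α₀, hα₀⟩ := exists_forall_sub_lt_of_almost_monotone hmono hbdd (half_pos hε)
  obtain ⟨N, hAN, hα₀N⟩ := directed_of (· ≤ ·) A α₀
  refine ⟨N, fun m n hm hmn => ?_⟩
  linarith [hA m n (hAN.trans hm) hmn, hα₀ m n (hα₀N.trans hm) hmn]

/-- A bounded almost geodesic in a complete metric space converges. -/
theorem almost_geodesic_bounded_converges {ι X : Type*} [Preorder ι]
    [IsDirected ι (· ≤ ·)] [Nonempty ι] [MetricSpace X] [CompleteSpace X]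
    (z : ι → X) (b : X)
    (hgeo : ∀ ε : ℝ, 0 < ε → ∃ A : ι, ∀ α α' : ι, A ≤ α → α ≤ α' →
        dist b (z α) + dist (z α) (z α') - ε ≤ dist b (z α'))
    (hbdd : ∃ M : ℝ, ∀ α, dist b (z α) ≤ M) :
    ∃ p : X, Tendsto z atTop (𝓝 p) := by
  obtain ⟨M, hM⟩ := hbdd
  have hbdd' : BddAbove (range fun α => dist b (z α)) := ⟨M, forall_mem_range.2 hM⟩
  exact cauchySeq_tendsto_of_complete (IsAlmostGeodesic.cauchySeq hgeo hbdd')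
end

section
/- Let μ, μ₁, μ₂ be signed regular Borel measures on a compact Hausdorff space K with total variation norms ‖μ₁‖ ≤ 1, ‖μ₂‖ ≤ 1, and suppose μ = (1−λ)μ₁ + λμ₂ for some λ ∈ (0,1) and ‖μ‖ = 1. Then ‖μ₁‖ = ‖μ₂‖ = 1, and the Jordan decompositions satisfy μ⁺ = (1−λ)μ₁⁺ + λμ₂⁺ and μ⁻ = (1−λ)μ₁⁻ + λμ₂⁻. -/
/-!
Write `P = (1-λ)μ₁⁺ + λμ₂⁺` and `N = (1-λ)μ₁⁻ + λμ₂⁻`, so that `μ = P - N`. Minimality of the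
Jordan decomposition gives `μ⁺ ≤ P` and `μ⁻ ≤ N`, hence
`1 = ‖μ‖ ≤ P(K) + N(K) = (1-λ)‖μ₁‖ + λ‖μ₂‖ ≤ 1`. Equality throughout forces `‖μ₁‖ = ‖μ₂‖ = 1`,
and a finite measure dominated by another of the same total mass equals it.
-/

open MeasureTheory
open scoped ENNReal

theorem ENNReal.eq_one_of_one_le_mul_add_mul {a b x y : ℝ≥0∞} (hab : a + b = 1) (ha : a ≠ 0)
    (hx : x ≤ 1) (hy : y ≤ 1) (h : 1 ≤ a * x + b * y) : x = 1 := by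
  have ha_top : a ≠ ∞ := ne_top_of_le_ne_top one_ne_top (hab ▸ le_self_add)
  have hb_top : b ≠ ∞ := ne_top_of_le_ne_top one_ne_top (hab ▸ le_add_self)
  refine le_antisymm hx (not_lt.1 fun hlt => h.not_gt ?_)
  calc a * x + b * y < a * 1 + b * 1 :=
        ENNReal.add_lt_add_of_lt_of_le
          (ENNReal.mul_ne_top hb_top (ne_top_of_le_ne_top one_ne_top hy))
          (ENNReal.mul_lt_mul_right ha ha_top hlt) (by gcongr)
    _ = 1 := by rw [mul_one, mul_one, hab]

theorem MeasureTheory.Measure.eq_and_eq_of_le_of_measure_univ_add_le {α : Type*}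
    [MeasurableSpace α] {μ μ' ν ν' : Measure α} [IsFiniteMeasure μ] [IsFiniteMeasure ν]
    (hμ : μ ≤ μ') (hν : ν ≤ ν') (h : μ' .univ + ν' .univ ≤ μ .univ + ν .univ) :
    μ = μ' ∧ ν = ν' := by
  have hμ_univ : μ .univ = μ' .univ := by
    refine le_antisymm (hμ _) (not_lt.1 fun hlt => h.not_gt ?_)
    exact ENNReal.add_lt_add_of_lt_of_le (measure_ne_top ν _) hlt (hν _)
  refine ⟨Measure.eq_of_le_of_measure_univ_eq hμ hμ_univ,
    Measure.eq_of_le_of_measure_univ_eq hν (le_antisymm (hν _) ?_)⟩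
  rw [← hμ_univ] at h
  exact ENNReal.le_of_add_le_add_left (measure_ne_top μ _) h

namespace MeasureTheory.SignedMeasure

variable {α : Type*} [MeasurableSpace α]

theorem toJordanDecomposition_posPart_le_of_eq_sub (s : SignedMeasure α) {μ ν : Measure α}
    [IsFiniteMeasure μ] [IsFiniteMeasure ν] (h : s = μ.toSignedMeasure - ν.toSignedMeasure) :
    s.toJordanDecomposition.posPart ≤ μ := by
  obtain ⟨i, hi, hi₀, -, hpos, -⟩ := s.toJordanDecomposition_spec
  refine Measure.le_intro fun E hE _ => ?_
  rw [← ENNReal.ofReal_toReal (measure_ne_top _ E), ← ENNReal.ofReal_toReal (measure_ne_top μ E)]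
  refine ENNReal.ofReal_le_ofReal ?_
  rw [← measureReal_def, ← measureReal_def, hpos, toMeasureOfZeroLE_real_apply _ hi₀ hi hE, h,
    Measure.toSignedMeasure_sub_apply (hi.inter hE)]
  have hμ_mono := measureReal_mono (μ := μ) (Set.inter_subset_right : i ∩ E ⊆ E)
  have hν_nonneg := measureReal_nonneg (μ := ν) (s := i ∩ E)
  linarith

theorem toJordanDecomposition_negPart_le_of_eq_sub (s : SignedMeasure α) {μ ν : Measure α}
    [IsFiniteMeasure μ] [IsFiniteMeasure ν] (h : s = μ.toSignedMeasure - ν.toSignedMeasure) :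
    s.toJordanDecomposition.negPart ≤ ν := by
  have := (-s).toJordanDecomposition_posPart_le_of_eq_sub (by rw [h, neg_sub])
  rwa [toJordanDecomposition_neg, JordanDecomposition.neg_posPart] at this

theorem toJordanDecomposition_posPart_add_le (s t : SignedMeasure α) :
    (s + t).toJordanDecomposition.posPart
      ≤ s.toJordanDecomposition.posPart + t.toJordanDecomposition.posPart := by
  refine toJordanDecomposition_posPart_le_of_eq_sub _
    (ν := s.toJordanDecomposition.negPart + t.toJordanDecomposition.negPart) ?_
  conv_lhs =>
    rw [← s.toSignedMeasure_toJordanDecomposition, ← t.toSignedMeasure_toJordanDecomposition]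
  simp only [JordanDecomposition.toSignedMeasure, Measure.toSignedMeasure_add]
  abel

theorem toJordanDecomposition_negPart_add_le (s t : SignedMeasure α) :
    (s + t).toJordanDecomposition.negPart
      ≤ s.toJordanDecomposition.negPart + t.toJordanDecomposition.negPart := by
  have := toJordanDecomposition_posPart_add_le (-s) (-t)
  rwa [← neg_add, toJordanDecomposition_neg, toJordanDecomposition_neg,
    toJordanDecomposition_neg] at this

theorem toJordanDecomposition_posPart_smul_of_nonneg (s : SignedMeasure α) {r : ℝ} (hr : 0 ≤ r) :
    (r • s).toJordanDecomposition.posPart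
      = ENNReal.ofReal r • s.toJordanDecomposition.posPart := by
  rw [toJordanDecomposition_smul_real, JordanDecomposition.real_smul_posPart_nonneg _ _ hr]
  rfl

theorem toJordanDecomposition_negPart_smul_of_nonneg (s : SignedMeasure α) {r : ℝ} (hr : 0 ≤ r) :
    (r • s).toJordanDecomposition.negPart
      = ENNReal.ofReal r • s.toJordanDecomposition.negPart := by
  rw [toJordanDecomposition_smul_real, JordanDecomposition.real_smul_negPart_nonneg _ _ hr]
  rfl

end MeasureTheory.SignedMeasure

open MeasureTheory SignedMeasure

theorem jordan_decomposition_affine_on_sphere_general {K : Type*} [MeasurableSpace K]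
    (μ μ₁ μ₂ : SignedMeasure K)
    (l : ℝ) (hl : l ∈ Set.Ioo (0 : ℝ) 1)
    (h₁ : μ₁.totalVariation Set.univ ≤ 1) (h₂ : μ₂.totalVariation Set.univ ≤ 1)
    (hμ : μ = (1 - l) • μ₁ + l • μ₂)
    (hnorm : μ.totalVariation Set.univ = 1) :
    μ₁.totalVariation Set.univ = 1 ∧ μ₂.totalVariation Set.univ = 1 ∧
    μ.toJordanDecomposition.posPart
      = ENNReal.ofReal (1 - l) • μ₁.toJordanDecomposition.posPart
        + ENNReal.ofReal l • μ₂.toJordanDecomposition.posPart ∧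
    μ.toJordanDecomposition.negPart
      = ENNReal.ofReal (1 - l) • μ₁.toJordanDecomposition.negPart
        + ENNReal.ofReal l • μ₂.toJordanDecomposition.negPart := by
  obtain ⟨hl₀, hl₁⟩ := hl
  have hweights : ENNReal.ofReal (1 - l) + ENNReal.ofReal l = 1 := by
    rw [← ENNReal.ofReal_add (by linarith) hl₀.le, sub_add_cancel, ENNReal.ofReal_one]
  have hpos := toJordanDecomposition_posPart_add_le ((1 - l) • μ₁) (l • μ₂)
  have hneg := toJordanDecomposition_negPart_add_le ((1 - l) • μ₁) (l • μ₂)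
  rw [← hμ, toJordanDecomposition_posPart_smul_of_nonneg _ (by linarith),
    toJordanDecomposition_posPart_smul_of_nonneg _ hl₀.le] at hpos
  rw [← hμ, toJordanDecomposition_negPart_smul_of_nonneg _ (by linarith),
    toJordanDecomposition_negPart_smul_of_nonneg _ hl₀.le] at hneg
  set P := ENNReal.ofReal (1 - l) • μ₁.toJordanDecomposition.posPart
    + ENNReal.ofReal l • μ₂.toJordanDecomposition.posPart
  set N := ENNReal.ofReal (1 - l) • μ₁.toJordanDecomposition.negPart
    + ENNReal.ofReal l • μ₂.toJordanDecomposition.negPart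
  have hPN : P .univ + N .univ = ENNReal.ofReal (1 - l) * μ₁.totalVariation .univ
      + ENNReal.ofReal l * μ₂.totalVariation .univ := by
    simp only [P, N, totalVariation, Measure.add_apply, Measure.smul_apply, smul_eq_mul]
    ring
  have hmass : 1 ≤ ENNReal.ofReal (1 - l) * μ₁.totalVariation .univ
      + ENNReal.ofReal l * μ₂.totalVariation .univ :=
    hPN ▸ hnorm ▸ add_le_add (hpos _) (hneg _)
  have hn₁ := ENNReal.eq_one_of_one_le_mul_add_mul hweights
    (ENNReal.ofReal_pos.2 (by linarith)).ne' h₁ h₂ hmass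
  have hn₂ := ENNReal.eq_one_of_one_le_mul_add_mul ((add_comm _ _).trans hweights)
    (ENNReal.ofReal_pos.2 hl₀).ne' h₂ h₁ (hmass.trans (add_comm _ _).le)
  refine ⟨hn₁, hn₂, Measure.eq_and_eq_of_le_of_measure_univ_add_le hpos hneg ?_⟩
  rw [hPN, hn₁, hn₂, mul_one, mul_one, hweights, ← hnorm]
  rfl

/-- If `μ = (1−λ)μ₁ + λμ₂` with `‖μ₁‖, ‖μ₂‖ ≤ 1` and `‖μ‖ = 1` (total variation
norms), then `‖μ₁‖ = ‖μ₂‖ = 1` and the Jordan decompositions combine affinely. -/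
theorem jordan_decomposition_affine_on_sphere {K : Type*} [TopologicalSpace K]
    [CompactSpace K] [T2Space K] [MeasurableSpace K] [BorelSpace K]
    (μ μ₁ μ₂ : SignedMeasure K)
    (hreg : μ.totalVariation.Regular) (hreg₁ : μ₁.totalVariation.Regular)
    (hreg₂ : μ₂.totalVariation.Regular)
    (l : ℝ) (hl : l ∈ Set.Ioo (0 : ℝ) 1)
    (h₁ : μ₁.totalVariation Set.univ ≤ 1) (h₂ : μ₂.totalVariation Set.univ ≤ 1)
    (hμ : μ = (1 - l) • μ₁ + l • μ₂)
    (hnorm : μ.totalVariation Set.univ = 1) :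
    μ₁.totalVariation Set.univ = 1 ∧ μ₂.totalVariation Set.univ = 1 ∧
    μ.toJordanDecomposition.posPart
      = ENNReal.ofReal (1 - l) • μ₁.toJordanDecomposition.posPart
        + ENNReal.ofReal l • μ₂.toJordanDecomposition.posPart ∧
    μ.toJordanDecomposition.negPart
      = ENNReal.ofReal (1 - l) • μ₁.toJordanDecomposition.negPart
        + ENNReal.ofReal l • μ₂.toJordanDecomposition.negPart :=
  jordan_decomposition_affine_on_sphere_general μ μ₁ μ₂ l hl h₁ h₂ hμ hnorm
end

section
/- Let K be a compact Hausdorff space and let u, v : K → [0,∞] be lower semicontinuous with inf u ∧ inf v = 0 and u(x) ∨ v(x) = ∞ for all x ∈ K. Define Φ(g) := max( sup_{x∈K}(−u(x) − g(x)), sup_{x∈K}(−v(x) + g(x)) ) for g ∈ C(K). Then Φ is the Legendre–Fenchel transform of the function Ξ on the dual of C(K) given by Ξ(μ) = ∫u dμ⁻ + ∫v dμ⁺ if ‖μ‖ = 1 and +∞ otherwise. -/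
open scoped ENNReal
open MeasureTheory

/-- `Ξ(μ) = ∫u dμ⁻ + ∫v dμ⁺` if `‖μ‖ = 1`, `+∞` otherwise. -/
noncomputable def Xi {K : Type*} [TopologicalSpace K] [MeasurableSpace K]
    (u v : K → ℝ≥0∞) (μ : SignedMeasure K) : ℝ≥0∞ :=
  if μ.totalVariation Set.univ = 1 then
    ∫⁻ x, u x ∂μ.toJordanDecomposition.negPart
      + ∫⁻ x, v x ∂μ.toJordanDecomposition.posPart
  else ⊤

/-! The supremum of `⟨μ, g⟩ − Ξ(μ)` is attained at the extreme points `±δ_x` of the unit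
sphere. Conversely, if `r` bounds both `−u − g` and `−v + g` pointwise, then integrating
`−v + g ≤ r` against `μ⁺` and `−u − g ≤ r` against `μ⁻` and adding gives
`⟨μ, g⟩ − Ξ(μ) ≤ (μ⁺(K) + μ⁻(K)) r = r` for every `μ` with `‖μ‖ = 1`. -/

theorem EReal.coe_sub_sub_coe_ennreal_add (a b : ℝ) (c d : ℝ≥0∞) :
    ((a - b : ℝ) : EReal) - ((c + d : ℝ≥0∞) : EReal)
      = (-(d : EReal) + a) + (-(c : EReal) + ((-b : ℝ) : EReal)) := by
  rw [EReal.coe_ennreal_add, sub_eq_add_neg,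
    EReal.neg_add (.inl (EReal.coe_ennreal_ne_bot _)) (.inr (EReal.coe_ennreal_ne_bot _)),
    EReal.coe_sub, EReal.coe_neg]
  simp only [sub_eq_add_neg]
  ac_rfl

section IntegralBound

variable {α : Type*} [MeasurableSpace α] {ν : Measure α} [IsFiniteMeasure ν]

theorem neg_lintegral_add_integral_le_of_forall_le {w : α → ℝ≥0∞} {f : α → ℝ} {r : ℝ}
    (hw : Measurable w) (hf : Integrable f ν) (hr : ∀ x, -(w x : EReal) + f x ≤ r) :
    -((∫⁻ x, w x ∂ν : ℝ≥0∞) : EReal) + (∫ x, f x ∂ν : ℝ) ≤ ((ν.real Set.univ * r : ℝ) : EReal) := by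
  by_cases hW : ∫⁻ x, w x ∂ν = ∞
  · simp [hW]
  have hw_fin : ∀ᵐ x ∂ν, w x < ∞ := ae_lt_top hw hW
  have hw_int : Integrable (fun x ↦ (w x).toReal) ν :=
    integrable_toReal_of_lintegral_ne_top hw.aemeasurable hW
  have hr_ae : ∀ᵐ x ∂ν, f x - (w x).toReal ≤ r := by
    filter_upwards [hw_fin] with x hx
    have hx_le := hr x
    rw [← EReal.coe_ennreal_toReal hx.ne] at hx_le
    have : -(w x).toReal + f x ≤ r := by exact_mod_cast hx_le
    linarith
  rw [← EReal.coe_ennreal_toReal hW, ← integral_toReal hw.aemeasurable hw_fin]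
  norm_cast
  calc -∫ x, (w x).toReal ∂ν + ∫ x, f x ∂ν = ∫ x, (f x - (w x).toReal) ∂ν := by
        rw [integral_sub hf hw_int]; ring
    _ ≤ ∫ _, r ∂ν := integral_mono_ae (hf.sub hw_int) (integrable_const r) hr_ae
    _ = ν.real Set.univ * r := by rw [integral_const, smul_eq_mul]

end IntegralBound

section Duality

variable {K : Type*} [TopologicalSpace K] [MeasurableSpace K] {u v : K → ℝ≥0∞}

theorem integral_sub_integral_sub_Xi_le (μ : SignedMeasure K) {f : K → ℝ} {r : ℝ}
    (hu : Measurable u) (hv : Measurable v)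
    (hf_pos : Integrable f μ.toJordanDecomposition.posPart)
    (hf_neg : Integrable f μ.toJordanDecomposition.negPart)
    (hru : ∀ x, -(u x : EReal) - f x ≤ r) (hrv : ∀ x, -(v x : EReal) + f x ≤ r) :
    ((∫ x, f x ∂μ.toJordanDecomposition.posPart
        - ∫ x, f x ∂μ.toJordanDecomposition.negPart : ℝ) : EReal) - (Xi u v μ : EReal) ≤ r := by
  set μp := μ.toJordanDecomposition.posPart
  set μn := μ.toJordanDecomposition.negPart
  unfold Xi
  split_ifs with hμ
  swap
  · simp
  have hmass : μp.real Set.univ + μn.real Set.univ = 1 := by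
    rw [Measure.real, Measure.real, ← ENNReal.toReal_add (measure_ne_top _ _)
      (measure_ne_top _ _)]
    exact congrArg ENNReal.toReal hμ |>.trans ENNReal.toReal_one
  have hru' : ∀ x, -(u x : EReal) + ((-f x : ℝ) : EReal) ≤ r := fun x ↦ by
    simpa [sub_eq_add_neg] using hru x
  rw [EReal.coe_sub_sub_coe_ennreal_add, ← integral_neg]
  calc _ ≤ ((μp.real Set.univ * r : ℝ) : EReal) + ((μn.real Set.univ * r : ℝ) : EReal) :=
        add_le_add (neg_lintegral_add_integral_le_of_forall_le hv hf_pos hrv)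
          (neg_lintegral_add_integral_le_of_forall_le hu hf_neg.neg hru')
    _ = r := by rw [← EReal.coe_add, ← add_mul, hmass, one_mul]

theorem Xi_toSignedMeasure (j : JordanDecomposition K)
    (hj : j.posPart Set.univ + j.negPart Set.univ = 1) :
    Xi u v j.toSignedMeasure = ∫⁻ x, u x ∂j.negPart + ∫⁻ x, v x ∂j.posPart := by
  rw [Xi, SignedMeasure.totalVariation,
    JordanDecomposition.toJordanDecomposition_toSignedMeasure]
  exact if_pos hj

end Duality

theorem Phi_eq_legendre_transform_Xi_general {K : Type*} [TopologicalSpace K]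
    [CompactSpace K] [MeasurableSpace K] [BorelSpace K]
    (u v : K → ℝ≥0∞) (hu : LowerSemicontinuous u) (hv : LowerSemicontinuous v)
    (g : C(K, ℝ)) :
    (⨆ μ : SignedMeasure K,
        (((∫ x, g x ∂μ.toJordanDecomposition.posPart
            - ∫ x, g x ∂μ.toJordanDecomposition.negPart : ℝ) : EReal)
          - (Xi u v μ : EReal)))
      = max (⨆ x : K, (-(u x : EReal) - (g x : ℝ)))
            (⨆ x : K, (-(v x : EReal) + (g x : ℝ))) := by
  have hg_int (ν : Measure K) [IsFiniteMeasure ν] : Integrable g ν :=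
    g.continuous.integrable_of_hasCompactSupport (.of_compactSpace _)
  have hg_meas : StronglyMeasurable g := g.continuous.stronglyMeasurable
  apply le_antisymm
  · refine iSup_le fun μ ↦ EReal.le_of_forall_lt_iff_le.1 fun r hr ↦ ?_
    exact integral_sub_integral_sub_Xi_le μ hu.measurable hv.measurable (hg_int _) (hg_int _)
      (fun x ↦ (le_iSup_of_le x le_rfl).trans ((le_max_left _ _).trans hr.le))
      (fun x ↦ (le_iSup_of_le x le_rfl).trans ((le_max_right _ _).trans hr.le))
  · refine max_le (iSup_le fun x ↦ ?_) (iSup_le fun x ↦ ?_)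
    · let j : JordanDecomposition K := ⟨0, .dirac x, .zero_left⟩
      refine le_iSup_of_le j.toSignedMeasure (le_of_eq ?_)
      rw [Xi_toSignedMeasure j (by simp [j]),
        JordanDecomposition.toJordanDecomposition_toSignedMeasure]
      simp [j, integral_dirac' _ _ hg_meas, lintegral_dirac' _ hu.measurable, sub_eq_add_neg,
        add_comm]
    · let j : JordanDecomposition K := ⟨.dirac x, 0, .zero_right⟩
      refine le_iSup_of_le j.toSignedMeasure (le_of_eq ?_)
      rw [Xi_toSignedMeasure j (by simp [j]),
        JordanDecomposition.toJordanDecomposition_toSignedMeasure]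
      simp [j, integral_dirac' _ _ hg_meas, lintegral_dirac' _ hv.measurable, sub_eq_add_neg,
        add_comm]

/-- `Φ(g) = max( sup(−u−g), sup(−v+g) )` is the Legendre–Fenchel transform
of `Ξ`. -/
theorem Phi_eq_legendre_transform_Xi {K : Type*} [TopologicalSpace K]
    [CompactSpace K] [T2Space K] [MeasurableSpace K] [BorelSpace K]
    (u v : K → ℝ≥0∞) (hu : LowerSemicontinuous u) (hv : LowerSemicontinuous v)
    (hinf : (⨅ x, u x) ⊓ (⨅ x, v x) = 0)
    (huv : ∀ x, u x ⊔ v x = ⊤) (g : C(K, ℝ)) :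
    (⨆ μ : SignedMeasure K,
        (((∫ x, g x ∂μ.toJordanDecomposition.posPart
            - ∫ x, g x ∂μ.toJordanDecomposition.negPart : ℝ) : EReal)
          - (Xi u v μ : EReal)))
      = max (⨆ x : K, (-(u x : EReal) - (g x : ℝ)))
            (⨆ x : K, (-(v x : EReal) + (g x : ℝ))) :=
  Phi_eq_legendre_transform_Xi_general u v hu hv g
end

section
/- Let D be a compact convex subset of a locally convex Hausdorff topological vector space E, and let f₁, f₂ : D → [0,∞) be upper semicontinuous affine functions. If sup_D (f₁/g) ≤ sup_D (f₂/g) for every continuous real-valued affine function g on E that is positive on D, then f₁ ≤ f₂ on D. -/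
/-!
Suppose `f₂ x₀ < f₁ x₀` for some `x₀ ∈ D`. The hypograph of `f₂` over `D` is closed (upper
semicontinuity) and convex (concavity), so Hahn–Banach separates `(x₀, f₁ x₀)` from it by a
continuous functional on `E × ℝ`. Solving the separating inequality for the `ℝ`-coordinate gives a
continuous affine `g` with `f₂ < g` on `D` and `g x₀ < f₁ x₀`. Then `g > 0` on `D`, and
`sup f₂/g ≤ 1 < f₁ x₀ / g x₀ ≤ sup f₁/g`.
-/

open Set

lemma concaveOn_of_affine {E : Type*} [AddCommGroup E] [Module ℝ E] {D : Set E} {f : E → ℝ}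
    (hD : Convex ℝ D)
    (hf : ∀ x ∈ D, ∀ y ∈ D, ∀ t ∈ Ioo (0 : ℝ) 1,
      f ((1 - t) • x + t • y) = (1 - t) * f x + t * f y) :
    ConcaveOn ℝ D f := by
  refine concaveOn_iff_forall_pos.2 ⟨hD, fun x hx y hy a b ha hb hab => ?_⟩
  obtain rfl : a = 1 - b := by linarith
  exact (hf x hx y hy b ⟨hb, by linarith⟩).ge

lemma bddAbove_image_div_of_isCompact {X : Type*} [TopologicalSpace X] {D : Set X}
    {f g : X → ℝ} (hD : IsCompact D) (hf : UpperSemicontinuousOn f D) (hg : ContinuousOn g D)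
    (hg_pos : ∀ x ∈ D, 0 < g x) :
    BddAbove ((fun x => f x / g x) '' D) := by
  rcases D.eq_empty_or_nonempty with rfl | hne
  · simp
  obtain ⟨M, hM⟩ := hf.bddAbove_of_isCompact hD
  obtain ⟨m, hm, hm_min⟩ := hD.exists_isMinOn hne hg
  refine ⟨max M 0 / g m, ?_⟩
  rintro _ ⟨x, hx, rfl⟩
  calc f x / g x ≤ max M 0 / g x :=
        div_le_div_of_nonneg_right (le_max_of_le_left (hM ⟨x, hx, rfl⟩)) (hg_pos x hx).le
    _ ≤ max M 0 / g m := div_le_div_of_nonneg_left (le_max_right _ _) (hg_pos m hm) (hm_min hx)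

lemma ConcaveOn.exists_continuousAffineMap_gt {E : Type*} [AddCommGroup E] [Module ℝ E]
    [TopologicalSpace E] [IsTopologicalAddGroup E] [ContinuousSMul ℝ E]
    [LocallyConvexSpace ℝ E] {D : Set E} {f : E → ℝ} (hf : ConcaveOn ℝ D f)
    (hD : IsClosed D) (hf_usc : UpperSemicontinuousOn f D) {x₀ : E} (hx₀ : x₀ ∈ D) {t : ℝ}
    (ht : f x₀ < t) :
    ∃ g : E →ᴬ[ℝ] ℝ, (∀ x ∈ D, f x < g x) ∧ g x₀ < t := by
  have h_not_mem : (x₀, t) ∉ {p : E × ℝ | p.1 ∈ D ∧ p.2 ≤ f p.1} := fun h => ht.not_ge h.2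
  obtain ⟨φ, u, hφ_hypo, hφ_pt⟩ := geometric_hahn_banach_closed_point hf.convex_hypograph
    ((upperSemicontinuousOn_iff_isClosed_hypograph hD).1 hf_usc) h_not_mem
  set L : E →L[ℝ] ℝ := φ.comp (ContinuousLinearMap.inl ℝ E ℝ)
  set c : ℝ := φ (0, 1)
  have hφ_split : ∀ x s, φ (x, s) = L x + s * c := fun x s => by
    rw [show (x, s) = (x, (0 : ℝ)) + s • ((0 : E), (1 : ℝ)) by simp, map_add, map_smul,
      smul_eq_mul, mul_comm]
    rfl
  have hφ_lt : ∀ x ∈ D, L x + f x * c < u := fun x hx => by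
    simpa only [hφ_split] using hφ_hypo (x, f x) ⟨hx, le_rfl⟩
  have hφ_gt : u < L x₀ + t * c := by rwa [← hφ_split]
  -- comparing the two inequalities at `x₀` forces the `ℝ`-coordinate of `φ` to be positive
  have hc : 0 < c := pos_of_mul_pos_right
    (show 0 < (t - f x₀) * c by linarith [hφ_lt x₀ hx₀]) (sub_nonneg.2 ht.le)
  have hg : ∀ x, (c⁻¹ • (ContinuousAffineMap.const ℝ E u - L.toContinuousAffineMap)) x =
      c⁻¹ * (u - L x) := fun x => by simp [smul_eq_mul]
  refine ⟨c⁻¹ • (ContinuousAffineMap.const ℝ E u - L.toContinuousAffineMap), fun x hx => ?_, ?_⟩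
  · rw [hg, lt_inv_mul_iff₀ hc]
    linarith [hφ_lt x hx]
  · rw [hg, inv_mul_lt_iff₀ hc]
    linarith

theorem le_of_sup_ratio_le_general {E : Type*} [AddCommGroup E] [Module ℝ E]
    [TopologicalSpace E] [IsTopologicalAddGroup E] [ContinuousSMul ℝ E]
    [LocallyConvexSpace ℝ E] [T2Space E]
    (D : Set E) (hD : IsCompact D) (hconv : Convex ℝ D)
    (f₁ f₂ : E → ℝ)
    (h₁usc : UpperSemicontinuousOn f₁ D) (h₂usc : UpperSemicontinuousOn f₂ D)
    (h₂nn : ∀ x ∈ D, 0 ≤ f₂ x)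
    (h₂aff : ∀ x ∈ D, ∀ y ∈ D, ∀ t ∈ Set.Ioo (0 : ℝ) 1,
      f₂ ((1 - t) • x + t • y) = (1 - t) * f₂ x + t * f₂ y)
    (hsup : ∀ g : E →ᴬ[ℝ] ℝ, (∀ x ∈ D, 0 < g x) →
      sSup ((fun x => f₁ x / g x) '' D) ≤ sSup ((fun x => f₂ x / g x) '' D)) :
    ∀ x ∈ D, f₁ x ≤ f₂ x := by
  intro x₀ hx₀
  by_contra! hlt
  obtain ⟨g, hf₂g, hgx₀⟩ := (concaveOn_of_affine hconv h₂aff).exists_continuousAffineMap_gt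
    hD.isClosed h₂usc hx₀ hlt
  have hg_pos : ∀ x ∈ D, 0 < g x := fun x hx => (h₂nn x hx).trans_lt (hf₂g x hx)
  have hsup₂ : sSup ((fun x => f₂ x / g x) '' D) ≤ 1 := by
    refine Real.sSup_le ?_ zero_le_one
    rintro _ ⟨x, hx, rfl⟩
    exact ((div_lt_one (hg_pos x hx)).2 (hf₂g x hx)).le
  have hsup₁ : 1 < sSup ((fun x => f₁ x / g x) '' D) :=
    ((one_lt_div (hg_pos x₀ hx₀)).2 hgx₀).trans_le <| le_csSup
      (bddAbove_image_div_of_isCompact hD h₁usc g.continuous.continuousOn hg_pos) ⟨x₀, hx₀, rfl⟩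
  linarith [hsup g hg_pos]

/-- If two nonnegative upper semicontinuous affine functions on a compact
convex set satisfy `sup f₁/g ≤ sup f₂/g` for every continuous affine `g`
positive on `D`, then `f₁ ≤ f₂` on `D`. -/
theorem le_of_sup_ratio_le {E : Type*} [AddCommGroup E] [Module ℝ E]
    [TopologicalSpace E] [IsTopologicalAddGroup E] [ContinuousSMul ℝ E]
    [LocallyConvexSpace ℝ E] [T2Space E]
    (D : Set E) (hD : IsCompact D) (hconv : Convex ℝ D)
    (f₁ f₂ : E → ℝ)
    (h₁usc : UpperSemicontinuousOn f₁ D) (h₂usc : UpperSemicontinuousOn f₂ D)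
    (h₁nn : ∀ x ∈ D, 0 ≤ f₁ x) (h₂nn : ∀ x ∈ D, 0 ≤ f₂ x)
    (h₁aff : ∀ x ∈ D, ∀ y ∈ D, ∀ t ∈ Set.Ioo (0 : ℝ) 1,
      f₁ ((1 - t) • x + t • y) = (1 - t) * f₁ x + t * f₁ y)
    (h₂aff : ∀ x ∈ D, ∀ y ∈ D, ∀ t ∈ Set.Ioo (0 : ℝ) 1,
      f₂ ((1 - t) • x + t • y) = (1 - t) * f₂ x + t * f₂ y)
    (hsup : ∀ g : E →ᴬ[ℝ] ℝ, (∀ x ∈ D, 0 < g x) →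
      sSup ((fun x => f₁ x / g x) '' D) ≤ sSup ((fun x => f₂ x / g x) '' D)) :
    ∀ x ∈ D, f₁ x ≤ f₂ x :=
  le_of_sup_ratio_le_general D hD hconv f₁ f₂ h₁usc h₂usc h₂nn h₂aff hsup
end

section
/- Let K be a compact Hausdorff space and b ∈ C⁺(K) the constant function 1. Let (g_α) be a non-increasing net in C⁺(K) converging pointwise to an upper semicontinuous function g : K → [0,1] with sup g = 1. Then for every h ∈ C⁺(K), the quantity d_R(h, g_α) − d_R(b, g_α) converges to log sup_{x∈K} (g(x)/h(x)), where d_R(h₁,h₂) := log sup_{x∈K} h₂(x)/h₁(x). -/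
/-!
Both suprema are suprema of a non-increasing net of continuous functions on a compact space
(`g_α` and `g_α / h`), so by Dini's argument they converge to the suprema of the pointwise limits,
`sup g = 1` and `sup g / h`, even though these limits are merely upper semicontinuous: for
`a > sup g` the open sets `{g_α < a}` increase and cover `K`, hence one of them is all of `K`.
The limit `sup g / h` is positive because `sup g = 1`, so the logarithm is continuous there.
-/

open Filter Topology

section Dini

variable {ι K : Type*} [Preorder ι] [IsDirected ι (· ≤ ·)] {f : ι → K → ℝ} {glim : K → ℝ}

lemma le_of_antitone_of_tendsto (hf : Antitone f)
    (hlim : ∀ x, Tendsto (f · x) atTop (𝓝 (glim x))) (α : ι) : glim ≤ f α :=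
  fun x => Antitone.le_of_tendsto (fun _ _ hαβ => hf hαβ x) (hlim x) α

variable [Nonempty ι] [TopologicalSpace K] [CompactSpace K]

lemma bddAbove_range_of_antitone_of_tendsto (hcont : ∀ α, Continuous (f α)) (hf : Antitone f)
    (hlim : ∀ x, Tendsto (f · x) atTop (𝓝 (glim x))) : BddAbove (Set.range glim) := by
  obtain ⟨α⟩ := ‹Nonempty ι›
  obtain ⟨M, hM⟩ := isCompact_range (hcont α) |>.bddAbove
  exact ⟨M, Set.forall_mem_range.2 fun x =>
    (le_of_antitone_of_tendsto hf hlim α x).trans (hM ⟨x, rfl⟩)⟩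

lemma exists_forall_lt_of_antitone_of_tendsto (hcont : ∀ α, Continuous (f α)) (hf : Antitone f)
    (hlim : ∀ x, Tendsto (f · x) atTop (𝓝 (glim x))) {a : ℝ} (ha : ∀ x, glim x < a) :
    ∃ α, ∀ x, f α x < a := by
  have hcover : Set.univ ⊆ ⋃ α, {x | f α x < a} := fun x _ =>
    Set.mem_iUnion.2 ((hlim x).eventually (gt_mem_nhds (ha x))).exists
  obtain ⟨α, hα⟩ := isCompact_univ.elim_directed_cover _
    (fun α => isOpen_lt (hcont α) continuous_const) hcover
    (Monotone.directed_le fun _ _ hαβ x (hx : f _ x < a) => (hf hαβ x).trans_lt hx)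
  exact ⟨α, fun x => hα (Set.mem_univ x)⟩

theorem tendsto_iSup_of_antitone_of_tendsto [Nonempty K] (hcont : ∀ α, Continuous (f α))
    (hf : Antitone f) (hlim : ∀ x, Tendsto (f · x) atTop (𝓝 (glim x))) :
    Tendsto (fun α => ⨆ x, f α x) atTop (𝓝 (⨆ x, glim x)) := by
  have hbdd : ∀ α, BddAbove (Set.range (f α)) := fun α => isCompact_range (hcont α) |>.bddAbove
  rw [tendsto_order]
  refine ⟨fun a ha => Eventually.of_forall fun α =>
    ha.trans_le (ciSup_mono (hbdd α) (le_of_antitone_of_tendsto hf hlim α)), fun a ha => ?_⟩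
  obtain ⟨a', hSa', ha'a⟩ := exists_between ha
  have hglim : ∀ x, glim x < a' := fun x =>
    (le_ciSup (bddAbove_range_of_antitone_of_tendsto hcont hf hlim) x).trans_lt hSa'
  obtain ⟨α, hα⟩ := exists_forall_lt_of_antitone_of_tendsto hcont hf hlim hglim
  filter_upwards [eventually_ge_atTop α] with β hαβ
  exact (ciSup_le fun x => (hf hαβ x).trans (hα x).le).trans_lt ha'a

end Dini

theorem reverse_funk_horofunction_convergence_general {ι K : Type*} [Preorder ι]
    [IsDirected ι (· ≤ ·)] [Nonempty ι]
    [TopologicalSpace K] [CompactSpace K] [Nonempty K]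
    (g : ι → C(K, ℝ))
    (hmono : ∀ α α' : ι, α ≤ α' → ∀ x, g α' x ≤ g α x)
    (glim : K → ℝ)
    (hsup : (⨆ x, glim x) = 1)
    (hlim : ∀ x, Tendsto (fun α => g α x) atTop (𝓝 (glim x))) :
    ∀ h : C(K, ℝ), (∀ x, 0 < h x) →
      Tendsto (fun α => Real.log (⨆ x, g α x / h x) - Real.log (⨆ x, g α x))
        atTop (𝓝 (Real.log (⨆ x, glim x / h x))) := by
  intro h hh
  have hcont_div : ∀ α, Continuous fun x => g α x / h x := fun α =>
    (g α).continuous.div h.continuous fun x => (hh x).ne'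
  have hanti_div : Antitone fun α x => g α x / h x := fun _ _ hαβ x =>
    div_le_div_of_nonneg_right (hmono _ _ hαβ x) (hh x).le
  have hlim_div : ∀ x, Tendsto (fun α => g α x / h x) atTop (𝓝 (glim x / h x)) := fun x =>
    (hlim x).div_const (h x)
  have hsup_g : Tendsto (fun α => ⨆ x, g α x) atTop (𝓝 1) :=
    hsup ▸ tendsto_iSup_of_antitone_of_tendsto (fun α => (g α).continuous) hmono hlim
  have hsup_div := tendsto_iSup_of_antitone_of_tendsto hcont_div hanti_div hlim_div
  have hpos_div : 0 < ⨆ x, glim x / h x := by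
    obtain ⟨x, hx⟩ := exists_lt_of_lt_ciSup (hsup ▸ one_pos : (0 : ℝ) < ⨆ x, glim x)
    exact (div_pos hx (hh x)).trans_le
      (le_ciSup (bddAbove_range_of_antitone_of_tendsto hcont_div hanti_div hlim_div) x)
  simpa only [Real.log_one, sub_zero] using
    (hsup_div.log hpos_div.ne').sub (hsup_g.log one_ne_zero)

/-- For a non-increasing net `g_α` in `C⁺(K)` converging pointwise to an upper
semicontinuous `g : K → [0,1]` with `sup g = 1`, for every `h ∈ C⁺(K)` the
quantity `d_R(h, g_α) − d_R(b, g_α)` converges to `log sup_x g(x)/h(x)`. -/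
theorem reverse_funk_horofunction_convergence {ι K : Type*} [Preorder ι]
    [IsDirected ι (· ≤ ·)] [Nonempty ι]
    [TopologicalSpace K] [CompactSpace K] [T2Space K] [Nonempty K]
    (g : ι → C(K, ℝ)) (hpos : ∀ α x, 0 < g α x)
    (hmono : ∀ α α' : ι, α ≤ α' → ∀ x, g α' x ≤ g α x)
    (glim : K → ℝ) (husc : UpperSemicontinuous glim)
    (hrange : ∀ x, 0 ≤ glim x ∧ glim x ≤ 1)
    (hsup : (⨆ x, glim x) = 1)
    (hlim : ∀ x, Tendsto (fun α => g α x) atTop (𝓝 (glim x))) :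
    ∀ h : C(K, ℝ), (∀ x, 0 < h x) →
      Tendsto (fun α => Real.log (⨆ x, g α x / h x) - Real.log (⨆ x, g α x))
        atTop (𝓝 (Real.log (⨆ x, glim x / h x))) :=
  reverse_funk_horofunction_convergence_general g hmono glim hsup hlim
end
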